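/- Let n ≥ 2, let U ⊆ ℝ^{n+1} be open, and let y_1,…,y_{n−1}, z : U → ℝ be smooth functions satisfying equations (E1), (E2), (E3) at every point of U. Fix 1 ≤ k ≤ n−1 and let μ = F*α be the pull-back of the standard contact form under the graph map, i.e. μ_p = α_{F(p)} ∘ dF_p. If γ : I → U is an integral curve of Ṽ_k (γ′(t) = Ṽ_k(γ(t)) for all t in the interval I) and w : I → ℝ^{n+1} solves the linearized equation w′(t) = (DṼ_k)_{γ(t)}(w(t)), then the function t ↦ μ_{γ(t)}(w(t)) is constant on I. (Equivalently, the Lie derivative L_{Ṽ_k} μ vanishes, so the flow of Ṽ_k preserves μ.) -/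

import Mathlib

open scoped BigOperators

/-- Partial derivative of `f` in the `i`-th coordinate direction. -/
noncomputable def pd {m : ℕ} (i : Fin m) (f : (Fin m → ℝ) → ℝ) (p : Fin m → ℝ) : ℝ :=
  fderiv ℝ f p (Pi.single i 1)

/-- Index of the coordinate `x_a` (for `1 ≤ a ≤ n-1`) in `ℝ^{n+1}` with
coordinates `(x_1, …, x_n, y_n)`. -/
def xIdx {n : ℕ} (a : Fin (n - 1)) : Fin (n + 1) := Fin.castLE (by omega) a

/-- Index of the coordinate `x_n`. -/
def xnIdx (n : ℕ) : Fin (n + 1) := ⟨n - 1, by omega⟩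

/-- Index of the coordinate `y_n`. -/
def ynIdx (n : ℕ) : Fin (n + 1) := ⟨n, by omega⟩

/-- Equation (E0). -/
noncomputable def E0 {n : ℕ} (y : Fin (n - 1) → (Fin (n + 1) → ℝ) → ℝ)
    (z : (Fin (n + 1) → ℝ) → ℝ) (a b c : Fin (n - 1)) (p : Fin (n + 1) → ℝ) : ℝ :=
  (pd (xIdx a) z p - y a p) * (pd (xIdx c) (y b) p - pd (xIdx b) (y c) p)
    - (pd (xIdx b) z p - y b p) * (pd (xIdx c) (y a) p - pd (xIdx a) (y c) p)
    + (pd (xIdx c) z p - y c p) * (pd (xIdx b) (y a) p - pd (xIdx a) (y b) p)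

/-- Equation (E1). -/
noncomputable def E1 {n : ℕ} (y : Fin (n - 1) → (Fin (n + 1) → ℝ) → ℝ)
    (z : (Fin (n + 1) → ℝ) → ℝ) (a b : Fin (n - 1)) (p : Fin (n + 1) → ℝ) : ℝ :=
  (pd (xIdx a) z p - y a p) * pd (xnIdx n) (y b) p
    - (pd (xIdx b) z p - y b p) * pd (xnIdx n) (y a) p
    + (pd (xnIdx n) z p - p (ynIdx n)) * (pd (xIdx b) (y a) p - pd (xIdx a) (y b) p)

/-- Equation (E2). -/
noncomputable def E2 {n : ℕ} (y : Fin (n - 1) → (Fin (n + 1) → ℝ) → ℝ)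
    (z : (Fin (n + 1) → ℝ) → ℝ) (a b : Fin (n - 1)) (p : Fin (n + 1) → ℝ) : ℝ :=
  (pd (xIdx a) z p - y a p) * pd (ynIdx n) (y b) p
    - (pd (xIdx b) z p - y b p) * pd (ynIdx n) (y a) p
    + pd (ynIdx n) z p * (pd (xIdx b) (y a) p - pd (xIdx a) (y b) p)

/-- Equation (E3). -/
noncomputable def E3 {n : ℕ} (y : Fin (n - 1) → (Fin (n + 1) → ℝ) → ℝ)
    (z : (Fin (n + 1) → ℝ) → ℝ) (a : Fin (n - 1)) (p : Fin (n + 1) → ℝ) : ℝ :=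
  pd (xIdx a) z p - (pd (xnIdx n) z p - p (ynIdx n)) * pd (ynIdx n) (y a) p
    + pd (ynIdx n) z p * pd (xnIdx n) (y a) p - y a p

/-- The function `Λ_{a,b}`. -/
noncomputable def Lam {n : ℕ} (y : Fin (n - 1) → (Fin (n + 1) → ℝ) → ℝ)
    (a b : Fin (n - 1)) (p : Fin (n + 1) → ℝ) : ℝ :=
  pd (ynIdx n) (y a) p * pd (xnIdx n) (y b) p - pd (ynIdx n) (y b) p * pd (xnIdx n) (y a) p
    + pd (xIdx b) (y a) p - pd (xIdx a) (y b) p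

/-- The graph map `F : ℝ^{n+1} → ℝ^{2n+1}`,
`F(x_1,…,x_n,y_n) = (x_1,…,x_n,y_1,…,y_{n-1},y_n,z)`. -/
noncomputable def graphMap (n : ℕ) (y : Fin (n - 1) → (Fin (n + 1) → ℝ) → ℝ)
    (z : (Fin (n + 1) → ℝ) → ℝ) (p : Fin (n + 1) → ℝ) : Fin (2 * n + 1) → ℝ := fun i =>
  if h1 : (i : ℕ) < n then p ⟨i, by omega⟩
  else if h2 : (i : ℕ) < 2 * n - 1 then y ⟨(i : ℕ) - n, by omega⟩ p
  else if h3 : (i : ℕ) = 2 * n - 1 then p (ynIdx n)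
  else z p

/-- The standard contact form `α = dz - Σ y_i dx_i` on `ℝ^{2n+1}` with coordinates
`(x_1,…,x_n,y_1,…,y_n,z)`, evaluated at the point `q` on the vector `v`. -/
noncomputable def contactForm (n : ℕ) (q v : Fin (2 * n + 1) → ℝ) : ℝ :=
  v ⟨2 * n, by omega⟩
    - ∑ i : Fin n, q ⟨n + i, by have := i.isLt; omega⟩ * v ⟨i, by have := i.isLt; omega⟩

/-- The standard symplectic form `ω₀ = Σ dx_i ∧ dy_i = dα` on `ℝ^{2n+1}`. -/
noncomputable def omega0 (n : ℕ) (u v : Fin (2 * n + 1) → ℝ) : ℝ :=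
  ∑ i : Fin n, (u ⟨i, by have := i.isLt; omega⟩ * v ⟨n + i, by have := i.isLt; omega⟩
    - u ⟨n + i, by have := i.isLt; omega⟩ * v ⟨i, by have := i.isLt; omega⟩)

/-- The 3-form `α ∧ ω₀` evaluated at the point `q` on the vectors `u, v, w`. -/
noncomputable def awedge (n : ℕ) (q u v w : Fin (2 * n + 1) → ℝ) : ℝ :=
  contactForm n q u * omega0 n v w - contactForm n q v * omega0 n u w
    + contactForm n q w * omega0 n u v

/-- The vector field `Ṽ_k = ∂_{x_k} - (∂y_k/∂y_n) ∂_{x_n} + (∂y_k/∂x_n) ∂_{y_n}` on `ℝ^{n+1}`. -/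
noncomputable def Vt (n : ℕ) (y : Fin (n - 1) → (Fin (n + 1) → ℝ) → ℝ) (k : Fin (n - 1))
    (p : Fin (n + 1) → ℝ) : Fin (n + 1) → ℝ :=
  (Pi.single (xIdx k) 1 : Fin (n + 1) → ℝ)
    - pd (ynIdx n) (y k) p • (Pi.single (xnIdx n) 1 : Fin (n + 1) → ℝ)
    + pd (xnIdx n) (y k) p • (Pi.single (ynIdx n) 1 : Fin (n + 1) → ℝ)


/-!
Let `μ = F*α = dz - Σ Y_i dx_i`, where `Y_i` is the `y_i`-coordinate of `F`, and `V = Ṽ_k`.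
Along an integral curve `γ` of `V` and a solution `w` of the linearized equation,
`d/dt μ_{γ(t)}(w(t)) = (L_V μ)(w(t))`, and by Cartan's formula `L_V μ = d(ι_V μ) + ι_V dμ`.
Equation (E3) says precisely that `ι_V μ = 0`. By symmetry of the second derivatives of `z`,
`dμ = -Σ dY_i ∧ dx_i`, and a direct computation gives `ι_V dμ = Σ_a Λ_{k,a} dx_a`.
Finally (E1)–(E3) force `Λ ≡ 0`.
-/

open Filter Topology

section PullbackForm
variable {E ι : Type*} [NormedAddCommGroup E] [NormedSpace ℝ E] [Fintype ι]
  {z : E → ℝ} {Y : ι → E → ℝ} {ℓ : ι → E →L[ℝ] ℝ} {p : E}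

/-- The pull-back of the contact form `dz - Σ yᵢ dxᵢ` under `p ↦ (ℓ p, Y p, z p)`. -/
noncomputable def pullbackContactForm (z : E → ℝ) (Y : ι → E → ℝ) (ℓ : ι → E →L[ℝ] ℝ) (p : E) :
    E →L[ℝ] ℝ :=
  fderiv ℝ z p - ∑ i, Y i p • ℓ i

/-- `Σᵢ dYᵢ ∧ dℓᵢ`. -/
noncomputable def sumDWedge (Y : ι → E → ℝ) (ℓ : ι → E →L[ℝ] ℝ) (p u v : E) : ℝ :=
  ∑ i, (fderiv ℝ (Y i) p u * ℓ i v - fderiv ℝ (Y i) p v * ℓ i u)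

lemma hasFDerivAt_pullbackContactForm (hz : ContDiffAt ℝ 2 z p)
    (hY : ∀ i, DifferentiableAt ℝ (Y i) p) :
    HasFDerivAt (pullbackContactForm z Y ℓ)
      (fderiv ℝ (fderiv ℝ z) p - ∑ i, (fderiv ℝ (Y i) p).smulRight (ℓ i)) p := by
  have hdz : DifferentiableAt ℝ (fderiv ℝ z) p :=
    (hz.fderiv_right (m := 1) le_rfl).differentiableAt one_ne_zero
  exact hdz.hasFDerivAt.sub (HasFDerivAt.fun_sum fun i _ => (hY i).hasFDerivAt.smul_const (ℓ i))

lemma fderiv_pullbackContactForm_antisymm (hz : ContDiffAt ℝ 2 z p)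
    (hY : ∀ i, DifferentiableAt ℝ (Y i) p) (u v : E) :
    fderiv ℝ (pullbackContactForm z Y ℓ) p u v - fderiv ℝ (pullbackContactForm z Y ℓ) p v u =
      -sumDWedge Y ℓ p u v := by
  have hsymm := hz.isSymmSndFDerivAt (by simp) u v
  rw [(hasFDerivAt_pullbackContactForm hz hY).fderiv]
  simp [sumDWedge, hsymm, Finset.sum_sub_distrib]

/-- Cartan's formula `L_V μ = d(ι_V μ) + ι_V dμ`, where `ι_V μ` vanishes near `p`. -/
lemma lie_eq_of_eventually_apply_eq_zero {μ : E → E →L[ℝ] ℝ} {V : E → E}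
    (hμ : DifferentiableAt ℝ μ p) (hV : DifferentiableAt ℝ V p)
    (h : ∀ᶠ q in 𝓝 p, μ q (V q) = 0) (v : E) :
    fderiv ℝ μ p (V p) v + μ p (fderiv ℝ V p v) = fderiv ℝ μ p (V p) v - fderiv ℝ μ p v (V p) := by
  have h0 : fderiv ℝ (fun q => μ q (V q)) p v = 0 := by
    have h' : (fun q => μ q (V q)) =ᶠ[𝓝 p] fun _ => 0 := h
    rw [h'.fderiv_eq, fderiv_const_apply]
    rfl
  rw [fderiv_clm_apply hμ hV] at h0
  simp only [add_apply, ContinuousLinearMap.comp_apply,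
    ContinuousLinearMap.flip_apply] at h0
  linarith

lemma hasDerivAt_pullbackContactForm_along_flow {V : E → E} {γ w : ℝ → E} {t : ℝ}
    (hz : ContDiffAt ℝ 2 z (γ t)) (hY : ∀ i, DifferentiableAt ℝ (Y i) (γ t))
    (hV : DifferentiableAt ℝ V (γ t))
    (hVμ : ∀ᶠ q in 𝓝 (γ t), pullbackContactForm z Y ℓ q (V q) = 0)
    (hγ : HasDerivAt γ (V (γ t)) t) (hw : HasDerivAt w (fderiv ℝ V (γ t) (w t)) t) :
    HasDerivAt (fun s => pullbackContactForm z Y ℓ (γ s) (w s))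
      (-sumDWedge Y ℓ (γ t) (V (γ t)) (w t)) t := by
  have hμ := hasFDerivAt_pullbackContactForm (ℓ := ℓ) hz hY
  refine ((hμ.differentiableAt.hasFDerivAt.comp_hasDerivAt t hγ).clm_apply hw).congr_deriv ?_
  exact (lie_eq_of_eventually_apply_eq_zero hμ.differentiableAt hV hVμ _).trans
    (fderiv_pullbackContactForm_antisymm hz hY _ _)

end PullbackForm

theorem Set.OrdConnected.eq_of_hasDerivAt_eq_zero {F : Type*} [NormedAddCommGroup F]
    [NormedSpace ℝ F] {I : Set ℝ} (hI : I.OrdConnected) {g : ℝ → F}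
    (hg : ∀ t ∈ I, HasDerivAt g 0 t) {t t' : ℝ} (ht : t ∈ I) (ht' : t' ∈ I) : g t = g t' := by
  have := hI.convex.norm_image_sub_le_of_norm_hasDerivWithin_le
    (fun s hs => (hg s hs).hasDerivWithinAt) (fun _ _ => norm_zero.le) ht' ht
  rw [zero_mul, norm_le_zero_iff, sub_eq_zero] at this
  exact this

section PartialDerivatives
variable {m : ℕ} {f g : (Fin m → ℝ) → ℝ} {p : Fin m → ℝ}

lemma pd_congr_of_eventuallyEq (h : f =ᶠ[𝓝 p] g) (i : Fin m) : pd i f p = pd i g p := by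
  rw [pd, h.fderiv_eq, pd]

lemma pd_const (i : Fin m) (c : ℝ) : pd i (fun _ => c) p = 0 := by
  simp [pd]

lemma pd_coord (i j : Fin m) : pd i (fun q => q j) p = if j = i then 1 else 0 := by
  have : (fun q : Fin m → ℝ => q j) = ContinuousLinearMap.proj (R := ℝ) j := rfl
  rw [pd, this, ContinuousLinearMap.fderiv]
  simp [Pi.single_apply]

lemma fderiv_eq_sum_pd (v : Fin m → ℝ) : fderiv ℝ f p v = ∑ i, v i * pd i f p := by
  conv_lhs => rw [← Finset.univ_sum_single v]
  simp only [map_sum, pd]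
  refine Finset.sum_congr rfl fun i _ => ?_
  rw [← smul_eq_mul, ← map_smul, ← Pi.single_smul', smul_eq_mul, mul_one]

lemma ContDiffAt.pd {k l : WithTop ℕ∞} (hf : ContDiffAt ℝ k f p) (hlk : l + 1 ≤ k) (i : Fin m) :
    ContDiffAt ℝ l (pd i f) p :=
  (hf.fderiv_right hlk).clm_apply contDiffAt_const

lemma pd_comm (hf : ContDiffAt ℝ 2 f p) (i j : Fin m) : pd i (pd j f) p = pd j (pd i f) p := by
  have hdf : DifferentiableAt ℝ (fderiv ℝ f) p :=
    (hf.fderiv_right (m := 1) le_rfl).differentiableAt one_ne_zero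
  have hpd : ∀ (k : Fin m) (u : Fin m → ℝ),
      fderiv ℝ (pd k f) p u = fderiv ℝ (fderiv ℝ f) p u (Pi.single k 1) := fun k u => by
    rw [show pd k f = fun q => fderiv ℝ f q (Pi.single k 1) from rfl,
      fderiv_clm_apply hdf (differentiableAt_const _)]
    simp
  rw [pd, pd, hpd, hpd, hf.isSymmSndFDerivAt (by simp)]

end PartialDerivatives

section Indices
variable {n : ℕ}

lemma xIdx_injective : Function.Injective (xIdx (n := n)) := Fin.castLE_injective (by omega)

lemma xIdx_ne_xnIdx (a : Fin (n - 1)) : xIdx a ≠ xnIdx n := by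
  simp only [xIdx, xnIdx, ne_eq, Fin.ext_iff, Fin.val_castLE]
  omega

lemma xIdx_ne_ynIdx (a : Fin (n - 1)) : xIdx a ≠ ynIdx n := by
  simp only [xIdx, ynIdx, ne_eq, Fin.ext_iff, Fin.val_castLE]
  omega

lemma xnIdx_ne_ynIdx (hn : n ≠ 0) : xnIdx n ≠ ynIdx n := by
  simp only [xnIdx, ynIdx, ne_eq, Fin.ext_iff]
  omega

lemma Fin.sum_univ_eq_sum_castLE_add {M : Type*} [AddCommMonoid M] (hn : n ≠ 0) (f : Fin n → M) :
    ∑ i, f i = ∑ a : Fin (n - 1), f (Fin.castLE (Nat.sub_le n 1) a) + f ⟨n - 1, by omega⟩ := by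
  rw [← Fin.sum_congr' f (Nat.sub_add_cancel (Nat.one_le_iff_ne_zero.2 hn)), Fin.sum_univ_castSucc]
  rfl

lemma sum_univ_eq_sum_xIdx_add {M : Type*} [AddCommMonoid M] (hn : n ≠ 0) (f : Fin (n + 1) → M) :
    ∑ i, f i = ∑ a : Fin (n - 1), f (xIdx a) + f (xnIdx n) + f (ynIdx n) := by
  rw [Fin.sum_univ_castSucc, Fin.sum_univ_eq_sum_castLE_add hn]
  rfl

end Indices

section Lambda
variable {n : ℕ} {y : Fin (n - 1) → (Fin (n + 1) → ℝ) → ℝ} {z : (Fin (n + 1) → ℝ) → ℝ}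
  {p : Fin (n + 1) → ℝ} {a b : Fin (n - 1)}

lemma sub_mul_lam_eq_zero (h1 : E1 y z a b p = 0) (h3a : E3 y z a p = 0)
    (h3b : E3 y z b p = 0) : (pd (xnIdx n) z p - p (ynIdx n)) * Lam y a b p = 0 := by
  unfold E1 E3 at *
  unfold Lam
  linear_combination h1 - pd (xnIdx n) (y b) p * h3a + pd (xnIdx n) (y a) p * h3b

lemma pd_mul_lam_eq_zero (h2 : E2 y z a b p = 0) (h3a : E3 y z a p = 0)
    (h3b : E3 y z b p = 0) : pd (ynIdx n) z p * Lam y a b p = 0 := by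
  unfold E2 E3 at *
  unfold Lam
  linear_combination h2 - pd (ynIdx n) (y b) p * h3a + pd (ynIdx n) (y a) p * h3b

/-- Where `Λ_{a,b} ≠ 0`, the two identities above force `∂z/∂x_n = y_n` and `∂z/∂y_n = 0`,
so the mixed partials `∂²z/∂y_n∂x_n = 1` and `∂²z/∂x_n∂y_n = 0` would differ. -/
lemma lam_eq_zero (hya : ContDiffAt ℝ 1 (y a) p) (hyb : ContDiffAt ℝ 1 (y b) p)
    (hz : ContDiffAt ℝ 2 z p) (hE1 : ∀ᶠ q in 𝓝 p, E1 y z a b q = 0)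
    (hE2 : ∀ᶠ q in 𝓝 p, E2 y z a b q = 0) (hE3a : ∀ᶠ q in 𝓝 p, E3 y z a q = 0)
    (hE3b : ∀ᶠ q in 𝓝 p, E3 y z b q = 0) : Lam y a b p = 0 := by
  by_contra hne
  have ha i : ContinuousAt (pd i (y a)) p := (hya.pd (l := 0) (by simp) i).continuousAt
  have hb i : ContinuousAt (pd i (y b)) p := (hyb.pd (l := 0) (by simp) i).continuousAt
  have hΛ : ∀ᶠ q in 𝓝 p, Lam y a b q ≠ 0 := by
    refine ContinuousAt.eventually_ne ?_ hne
    unfold Lam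
    fun_prop
  have hxn : pd (xnIdx n) z =ᶠ[𝓝 p] fun q => q (ynIdx n) := by
    filter_upwards [hΛ, hE1, hE3a, hE3b] with q hq h1 h3a h3b
    exact sub_eq_zero.1 ((mul_eq_zero.1 (sub_mul_lam_eq_zero h1 h3a h3b)).resolve_right hq)
  have hyn : pd (ynIdx n) z =ᶠ[𝓝 p] fun _ => 0 := by
    filter_upwards [hΛ, hE2, hE3a, hE3b] with q hq h2 h3a h3b
    exact (mul_eq_zero.1 (pd_mul_lam_eq_zero h2 h3a h3b)).resolve_right hq
  have hcomm := pd_comm hz (ynIdx n) (xnIdx n)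
  rw [pd_congr_of_eventuallyEq hxn, pd_congr_of_eventuallyEq hyn, pd_coord, pd_const,
    if_pos rfl] at hcomm
  exact one_ne_zero hcomm

end Lambda

section VectorField
variable {n : ℕ} {y : Fin (n - 1) → (Fin (n + 1) → ℝ) → ℝ} (k : Fin (n - 1))
  {p : Fin (n + 1) → ℝ}

lemma Vt_apply_xIdx (a : Fin (n - 1)) : Vt n y k p (xIdx a) = if a = k then 1 else 0 := by
  simp only [Vt, Pi.add_apply, Pi.sub_apply, Pi.smul_apply, Pi.single_apply,
    if_neg (xIdx_ne_xnIdx a), if_neg (xIdx_ne_ynIdx a), xIdx_injective.eq_iff]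
  simp

lemma Vt_apply_xnIdx : Vt n y k p (xnIdx n) = -pd (ynIdx n) (y k) p := by
  have hn : n ≠ 0 := by have := k.isLt; omega
  simp [Vt, (xIdx_ne_xnIdx k).symm, xnIdx_ne_ynIdx hn]

lemma Vt_apply_ynIdx : Vt n y k p (ynIdx n) = pd (xnIdx n) (y k) p := by
  have hn : n ≠ 0 := by have := k.isLt; omega
  simp [Vt, (xIdx_ne_ynIdx k).symm, (xnIdx_ne_ynIdx hn).symm]

lemma fderiv_apply_Vt (f : (Fin (n + 1) → ℝ) → ℝ) :
    fderiv ℝ f p (Vt n y k p) = pd (xIdx k) f p - pd (ynIdx n) (y k) p * pd (xnIdx n) f p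
      + pd (xnIdx n) (y k) p * pd (ynIdx n) f p := by
  simp [Vt, pd]

lemma differentiableAt_Vt (hy : ContDiffAt ℝ 2 (y k) p) : DifferentiableAt ℝ (Vt n y k) p := by
  have h i : DifferentiableAt ℝ (pd i (y k)) p :=
    (hy.pd (l := 1) (by norm_num) i).differentiableAt one_ne_zero
  unfold Vt
  fun_prop

end VectorField

section GraphForm
variable {n : ℕ} {y : Fin (n - 1) → (Fin (n + 1) → ℝ) → ℝ} {z : (Fin (n + 1) → ℝ) → ℝ}
  {p : Fin (n + 1) → ℝ}

/-- `some a` indexes the coordinate pair `(x_a, y_a)` and `none` the pair `(x_n, y_n)`. -/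
def graphY (y : Fin (n - 1) → (Fin (n + 1) → ℝ) → ℝ) :
    Option (Fin (n - 1)) → (Fin (n + 1) → ℝ) → ℝ :=
  fun o => o.elim (fun q => q (ynIdx n)) y

def graphX (n : ℕ) : Option (Fin (n - 1)) → (Fin (n + 1) → ℝ) →L[ℝ] ℝ :=
  fun o => ContinuousLinearMap.proj (o.elim (xnIdx n) xIdx)

lemma pullbackContactForm_graph_apply (v : Fin (n + 1) → ℝ) :
    pullbackContactForm z (graphY y) (graphX n) p v =
      fderiv ℝ z p v - (p (ynIdx n) * v (xnIdx n) + ∑ a, y a p * v (xIdx a)) := by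
  simp [pullbackContactForm, Fintype.sum_option, graphY, graphX]

lemma differentiableAt_graphMap (hy : ∀ a, DifferentiableAt ℝ (y a) p)
    (hz : DifferentiableAt ℝ z p) : DifferentiableAt ℝ (graphMap n y z) p := by
  refine differentiableAt_pi.2 fun i => ?_
  unfold graphMap
  split_ifs <;> fun_prop

lemma contactForm_graphMap (hn : n ≠ 0) (hy : ∀ a, DifferentiableAt ℝ (y a) p)
    (hz : DifferentiableAt ℝ z p) (v : Fin (n + 1) → ℝ) :
    contactForm n (graphMap n y z p) (fderiv ℝ (graphMap n y z) p v) =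
      pullbackContactForm z (graphY y) (graphX n) p v := by
  have hdF i : fderiv ℝ (graphMap n y z) p v i = fderiv ℝ (fun q => graphMap n y z q i) p v := by
    rw [fderiv_apply (differentiableAt_graphMap hy hz) i]
    rfl
  have hx (i : ℕ) (hi : i < n) : fderiv ℝ (graphMap n y z) p v ⟨i, by omega⟩ = v ⟨i, by omega⟩ := by
    rw [hdF]
    simp only [graphMap, dif_pos hi]
    rw [(hasFDerivAt_apply _ p).fderiv]
    rfl
  have hlast : fderiv ℝ (graphMap n y z) p v ⟨2 * n, by omega⟩ = fderiv ℝ z p v := by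
    rw [hdF]
    simp (disch := omega) only [graphMap, dif_neg]
  rw [contactForm, pullbackContactForm_graph_apply, Fin.sum_univ_eq_sum_castLE_add hn, hlast,
    add_comm (∑ a, _)]
  simp (disch := omega) only [hx, Fin.val_castLE, graphMap, dif_pos, dif_neg]
  simp only [Nat.add_sub_cancel_left]
  rfl

lemma pullbackContactForm_graph_Vt (k : Fin (n - 1)) :
    pullbackContactForm z (graphY y) (graphX n) p (Vt n y k p) = E3 y z k p := by
  simp only [pullbackContactForm_graph_apply, fderiv_apply_Vt, Vt_apply_xIdx, Vt_apply_xnIdx,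
    mul_ite, mul_one, mul_zero, Finset.sum_ite_eq', Finset.mem_univ, if_true, E3]
  ring

lemma lam_eq_pd_sub_fderiv_Vt (k a : Fin (n - 1)) :
    Lam y k a p = pd (xIdx a) (y k) p - fderiv ℝ (y a) p (Vt n y k p) := by
  rw [fderiv_apply_Vt, Lam]
  ring

lemma sumDWedge_graph_Vt (k : Fin (n - 1)) (w : Fin (n + 1) → ℝ) :
    sumDWedge (graphY y) (graphX n) p (Vt n y k p) w = -∑ a, w (xIdx a) * Lam y k a p := by
  have hn : n ≠ 0 := by have := k.isLt; omega
  have hyk : fderiv ℝ (y k) p w = ∑ a, w (xIdx a) * pd (xIdx a) (y k) p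
      + w (xnIdx n) * pd (xnIdx n) (y k) p + w (ynIdx n) * pd (ynIdx n) (y k) p := by
    rw [fderiv_eq_sum_pd, sum_univ_eq_sum_xIdx_add hn]
  simp only [sumDWedge, Fintype.sum_option, graphY, graphX, Option.elim,
    (hasFDerivAt_apply _ p).fderiv, ContinuousLinearMap.proj_apply, Vt_apply_xIdx, Vt_apply_xnIdx,
    Vt_apply_ynIdx, mul_ite, mul_one, mul_zero, Finset.sum_sub_distrib, Finset.sum_ite_eq',
    Finset.mem_univ, if_true, hyk, lam_eq_pd_sub_fderiv_Vt, sub_mul, mul_comm (w (xIdx _))]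
  ring

end GraphForm

section Flow
variable {n : ℕ} {y : Fin (n - 1) → (Fin (n + 1) → ℝ) → ℝ} {z : (Fin (n + 1) → ℝ) → ℝ}
  {k : Fin (n - 1)} {γ w : ℝ → Fin (n + 1) → ℝ} {t : ℝ}

lemma hasDerivAt_graph_form_along_flow (hy : ∀ a, ContDiffAt ℝ 2 (y a) (γ t))
    (hz : ContDiffAt ℝ 2 z (γ t)) (hE1 : ∀ a b, ∀ᶠ q in 𝓝 (γ t), E1 y z a b q = 0)
    (hE2 : ∀ a b, ∀ᶠ q in 𝓝 (γ t), E2 y z a b q = 0)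
    (hE3 : ∀ a, ∀ᶠ q in 𝓝 (γ t), E3 y z a q = 0)
    (hγ : HasDerivAt γ (Vt n y k (γ t)) t)
    (hw : HasDerivAt w (fderiv ℝ (Vt n y k) (γ t) (w t)) t) :
    HasDerivAt (fun s => pullbackContactForm z (graphY y) (graphX n) (γ s) (w s)) 0 t := by
  have hY : ∀ o, DifferentiableAt ℝ (graphY y o) (γ t)
    | none => differentiableAt_apply _ _
    | some a => (hy a).differentiableAt two_ne_zero
  have hVμ : ∀ᶠ q in 𝓝 (γ t), pullbackContactForm z (graphY y) (graphX n) q (Vt n y k q) = 0 := by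
    filter_upwards [hE3 k] with q hq
    rw [pullbackContactForm_graph_Vt, hq]
  have hΛ a : Lam y k a (γ t) = 0 :=
    lam_eq_zero ((hy k).of_le one_le_two) ((hy a).of_le one_le_two) hz (hE1 k a) (hE2 k a)
      (hE3 k) (hE3 a)
  convert hasDerivAt_pullbackContactForm_along_flow hz hY (differentiableAt_Vt k (hy k)) hVμ hγ hw
  simp [sumDWedge_graph_Vt, hΛ]

end Flow

theorem flow_preserves_restricted_form_general (n : ℕ) (U : Set (Fin (n + 1) → ℝ)) (hU : IsOpen U)
    (y : Fin (n - 1) → (Fin (n + 1) → ℝ) → ℝ) (z : (Fin (n + 1) → ℝ) → ℝ)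
    (hy : ∀ a, ContDiffOn ℝ (⊤ : ℕ∞) (y a) U) (hz : ContDiffOn ℝ (⊤ : ℕ∞) z U)
    (hE1 : ∀ a b, ∀ p ∈ U, E1 y z a b p = 0)
    (hE2 : ∀ a b, ∀ p ∈ U, E2 y z a b p = 0)
    (hE3 : ∀ a, ∀ p ∈ U, E3 y z a p = 0)
    (k : Fin (n - 1)) (I : Set ℝ) (hI : I.OrdConnected)
    (γ w : ℝ → Fin (n + 1) → ℝ)
    (hγU : ∀ t ∈ I, γ t ∈ U)
    (hγ : ∀ t ∈ I, HasDerivAt γ (Vt n y k (γ t)) t)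
    (hw : ∀ t ∈ I, HasDerivAt w (fderiv ℝ (Vt n y k) (γ t) (w t)) t) :
    ∀ t ∈ I, ∀ t' ∈ I,
      contactForm n (graphMap n y z (γ t)) (fderiv ℝ (graphMap n y z) (γ t) (w t)) =
        contactForm n (graphMap n y z (γ t')) (fderiv ℝ (graphMap n y z) (γ t') (w t')) := by
  have hn : n ≠ 0 := by have := k.isLt; omega
  have hC2 {f : (Fin (n + 1) → ℝ) → ℝ} (hf : ContDiffOn ℝ (⊤ : ℕ∞) f U) {p} (hp : p ∈ U) :
      ContDiffAt ℝ 2 f p :=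
    (hf.contDiffAt (hU.mem_nhds hp)).of_le (WithTop.coe_le_coe.2 le_top)
  have hμ : ∀ t ∈ I,
      contactForm n (graphMap n y z (γ t)) (fderiv ℝ (graphMap n y z) (γ t) (w t)) =
        pullbackContactForm z (graphY y) (graphX n) (γ t) (w t) := fun t ht =>
    contactForm_graphMap hn (fun a => (hC2 (hy a) (hγU t ht)).differentiableAt two_ne_zero)
      ((hC2 hz (hγU t ht)).differentiableAt two_ne_zero) (w t)
  have hderiv : ∀ t ∈ I,
      HasDerivAt (fun s => pullbackContactForm z (graphY y) (graphX n) (γ s) (w s)) 0 t := by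
    intro t ht
    have hev {P : (Fin (n + 1) → ℝ) → Prop} (h : ∀ q ∈ U, P q) : ∀ᶠ q in 𝓝 (γ t), P q :=
      Filter.eventually_of_mem (hU.mem_nhds (hγU t ht)) h
    exact hasDerivAt_graph_form_along_flow (fun a => hC2 (hy a) (hγU t ht)) (hC2 hz (hγU t ht))
      (fun a b => hev (hE1 a b)) (fun a b => hev (hE2 a b)) (fun a => hev (hE3 a)) (hγ t ht)
      (hw t ht)
  intro t ht t' ht'
  rw [hμ t ht, hμ t' ht']
  exact hI.eq_of_hasDerivAt_eq_zero hderiv ht ht'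

/-- The flow of `Ṽ_k` preserves the pulled-back contact form
`μ = F*α`: along an integral curve `γ` of `Ṽ_k` and a solution `w` of the linearized
equation, `t ↦ μ_{γ(t)}(w(t))` is constant. -/
theorem flow_preserves_restricted_form (n : ℕ) (hn : 2 ≤ n) (U : Set (Fin (n + 1) → ℝ)) (hU : IsOpen U)
    (y : Fin (n - 1) → (Fin (n + 1) → ℝ) → ℝ) (z : (Fin (n + 1) → ℝ) → ℝ)
    (hy : ∀ a, ContDiffOn ℝ (⊤ : ℕ∞) (y a) U) (hz : ContDiffOn ℝ (⊤ : ℕ∞) z U)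
    (hE1 : ∀ a b, ∀ p ∈ U, E1 y z a b p = 0)
    (hE2 : ∀ a b, ∀ p ∈ U, E2 y z a b p = 0)
    (hE3 : ∀ a, ∀ p ∈ U, E3 y z a p = 0)
    (k : Fin (n - 1)) (I : Set ℝ) (hI : I.OrdConnected)
    (γ w : ℝ → Fin (n + 1) → ℝ)
    (hγU : ∀ t ∈ I, γ t ∈ U)
    (hγ : ∀ t ∈ I, HasDerivAt γ (Vt n y k (γ t)) t)
    (hw : ∀ t ∈ I, HasDerivAt w (fderiv ℝ (Vt n y k) (γ t) (w t)) t) :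
    ∀ t ∈ I, ∀ t' ∈ I,
      contactForm n (graphMap n y z (γ t)) (fderiv ℝ (graphMap n y z) (γ t) (w t)) =
        contactForm n (graphMap n y z (γ t')) (fderiv ℝ (graphMap n y z) (γ t') (w t')) :=
  flow_preserves_restricted_form_general n U hU y z hy hz hE1 hE2 hE3 k I hI γ w hγU hγ hw
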